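/- Let R = GF(2)[c]/(c³) and S = R[[d]]. For all natural numbers u ≥ 2 and v ≥ 0, setting i = 2^u(2v+1), the element (1 + c)·(1 + c + c² + d) is a unit in S and the coefficient of c² in the d^i coefficient of d^{2^u(v+1)}·(1 + c + c² + d)^{2^u(v+1)}·(1 + c)²·((1 + c)·(1 + c + c² + d))^{-1} ∈ S equals 1. -/

import Mathlib

open Polynomial PowerSeries

noncomputable section

/-- The ring `R = GF(2)[c] / (c³)`. -/
abbrev R2 : Type := AdjoinRoot (Polynomial.X ^ 3 : Polynomial (ZMod 2))

/-- The class of the variable `c` in `R = GF(2)[c] / (c³)`. -/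
def cR : R2 := AdjoinRoot.root _

/-- The power series ring `S = R[[d]]`. -/
abbrev S2 : Type := PowerSeries R2

/-- The image of `c` in `S = R[[d]]`. -/
def cS : S2 := PowerSeries.C cR

/-- The variable `d` of `S = R[[d]]`. -/
def dS : S2 := PowerSeries.X

/-- The coefficient of `c²` of an element of `R = GF(2)[c] / (c³)`,
computed via the unique representative polynomial of degree `< 3`. -/
def coefc2 (x : R2) : ZMod 2 :=
  (AdjoinRoot.modByMonicHom (Polynomial.monic_X_pow 3) x).coeff 2

/-!
Write `e = 1 + c` and `a = 1 + c + c²`. In `R` one has `e * a = 1 + c³ = 1`, so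
`e * (a + d) = 1 + e d =: w` is a unit of `S` and `a + d = a * w`. With `m = 2^u (v+1)` and
`N = 2^u v` the series becomes `a^m e² d^m w^(m-1)`, whose `d^(N+m)` coefficient is
`a^m e² e^N C(m-1, N)`. Since `e⁴ = 1 + c⁴ = 1` and `4 ∣ m, N`, this is `e² C(m-1, N)`, and
`C(2^u (v+1) - 1, 2^u v)` is odd by Lucas's theorem, leaving `e² = 1 + c²`.
-/

theorem Nat.choose_prime_pow_mul_succ_sub_one_modEq_one (p : ℕ) [hp : Fact p.Prime] (u v : ℕ) :
    (p ^ u * (v + 1) - 1).choose (p ^ u * v) ≡ 1 [MOD p] := by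
  induction u with
  | zero => simp [Nat.ModEq.refl]
  | succ u ih =>
    have hp0 : 0 < p := hp.out.pos
    obtain ⟨B, hB⟩ : ∃ B, p ^ u * (v + 1) = B + 1 :=
      ⟨_, (Nat.succ_pred_eq_of_pos (by positivity)).symm⟩
    have hn : p ^ (u + 1) * (v + 1) - 1 = (p - 1) + p * (p ^ u * (v + 1) - 1) := by
      rw [pow_succ', mul_assoc, hB, Nat.add_sub_cancel, mul_add_one]
      omega
    have hk : p ^ (u + 1) * v = 0 + p * (p ^ u * v) := by ring
    rw [hn, hk]
    refine Choose.choose_modEq_choose_mod_mul_choose_div_nat.trans ?_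
    rw [Nat.add_mul_mod_self_left, Nat.add_mul_mod_self_left, Nat.add_mul_div_left _ _ hp0,
      Nat.add_mul_div_left _ _ hp0, Nat.mod_eq_of_lt (by omega), Nat.div_eq_of_lt (by omega)]
    simpa using ih

theorem PowerSeries.coeff_one_add_C_mul_X_pow {A : Type*} [CommRing A] (r : A) (k n : ℕ) :
    coeff n ((1 + C r * X : PowerSeries A) ^ k) = r ^ n * k.choose n := by
  have h : (1 + X : PowerSeries A) ^ k = ((1 + Polynomial.X) ^ k : Polynomial A) := by simp
  rw [← rescale_X, ← map_one (rescale r), ← map_add, ← map_pow, coeff_rescale, h,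
    Polynomial.coeff_coe, Polynomial.coeff_one_add_X_pow]

theorem PowerSeries.coeff_X_pow_mul_C_add_X_pow_mul_C_mul_inverse {A : Type*} [CommRing A]
    {e a : A} (hea : e * a = 1) (b : A) {m : ℕ} (hm : 0 < m) (N : ℕ) :
    coeff (N + m) (X ^ m * (C a + X) ^ m * C b * Ring.inverse (C e * (C a + X))) =
      a ^ m * b * e ^ N * (m - 1).choose N := by
  set w : PowerSeries A := 1 + C e * X with hw_def
  have hw : C e * (C a + X) = w := by rw [mul_add, ← map_mul, hea, map_one]
  have hfactor : C a + X = C a * w := by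
    rw [mul_add, mul_one, ← mul_assoc, ← map_mul, mul_comm a, hea, map_one, one_mul]
  have hinv : w * Ring.inverse w = 1 :=
    Ring.mul_inverse_cancel w (isUnit_iff_constantCoeff.2 (by simp [w]))
  clear_value w
  obtain ⟨k, rfl⟩ : ∃ k, m = k + 1 := ⟨m - 1, by omega⟩
  have hseries : X ^ (k + 1) * (C a + X) ^ (k + 1) * C b * Ring.inverse (C e * (C a + X)) =
      C (a ^ (k + 1) * b) * w ^ k * X ^ (k + 1) := by
    rw [hw, hfactor, map_mul, map_pow]
    linear_combination (X ^ (k + 1) * C a ^ (k + 1) * w ^ k * C b) * hinv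
  rw [hseries, coeff_mul_X_pow, coeff_C_mul, hw_def, coeff_one_add_C_mul_X_pow,
    Nat.add_sub_cancel]
  ring

lemma two_eq_zero_R2 : (2 : R2) = 0 := by
  rw [← map_ofNat (AdjoinRoot.of _) 2, show (2 : ZMod 2) = 0 from rfl, map_zero]

lemma cR_pow_three : cR ^ 3 = 0 := by
  rw [cR, ← AdjoinRoot.mk_X, ← map_pow, AdjoinRoot.mk_self]

lemma natCast_R2_eq_one_of_odd {n : ℕ} (hn : Odd n) : (n : R2) = 1 := by
  obtain ⟨k, rfl⟩ := hn
  push_cast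
  rw [two_eq_zero_R2, zero_mul, zero_add]

lemma one_add_cR_mul_one_add_cR_add_cR_sq : (1 + cR) * (1 + cR + cR ^ 2) = 1 := by
  linear_combination (cR + cR ^ 2) * two_eq_zero_R2 + cR_pow_three

lemma one_add_cR_sq : (1 + cR) ^ 2 = 1 + cR ^ 2 := by
  linear_combination cR * two_eq_zero_R2

lemma one_add_cR_pow_eq_one {n : ℕ} (hn : 4 ∣ n) : (1 + cR) ^ n = 1 := by
  obtain ⟨k, rfl⟩ := hn
  have h4 : (1 + cR) ^ 4 = 1 := by
    linear_combination (2 * cR + 3 * cR ^ 2 + 2 * cR ^ 3) * two_eq_zero_R2 + cR * cR_pow_three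
  rw [pow_mul, h4, one_pow]

lemma coefc2_one_add_cR_sq : coefc2 (1 + cR ^ 2) = 1 := by
  have hdeg : (1 + Polynomial.X ^ 2 : Polynomial (ZMod 2)).degree <
      (Polynomial.X ^ 3 : Polynomial (ZMod 2)).degree := by
    compute_degree!
  rw [coefc2, cR, ← AdjoinRoot.mk_X, ← map_pow, ← map_one (AdjoinRoot.mk _), ← map_add,
    AdjoinRoot.modByMonicHom_mk, (Polynomial.modByMonic_eq_self_iff (monic_X_pow 3)).2 hdeg]
  simp [Polynomial.coeff_one]

theorem unit_and_coefc2_case_iv (u v : ℕ) (hu : 2 ≤ u) :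
    IsUnit ((1 + cS) * (1 + cS + cS ^ 2 + dS)) ∧
      coefc2 (PowerSeries.coeff (2 ^ u * (2 * v + 1))
          (dS ^ (2 ^ u * (v + 1)) * (1 + cS + cS ^ 2 + dS) ^ (2 ^ u * (v + 1)) * (1 + cS) ^ 2 *
            Ring.inverse ((1 + cS) * (1 + cS + cS ^ 2 + dS)))) = 1 := by
  have hea := one_add_cR_mul_one_add_cR_add_cR_sq
  have he : 1 + cS = PowerSeries.C (1 + cR) := by simp [cS]
  have ha : 1 + cS + cS ^ 2 + dS = PowerSeries.C (1 + cR + cR ^ 2) + PowerSeries.X := by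
    simp [cS, dS]
  have h4 : 4 ∣ 2 ^ u := pow_dvd_pow 2 hu
  have ha_pow : (1 + cR + cR ^ 2) ^ (2 ^ u * (v + 1)) = 1 := by
    calc _ = ((1 + cR) * (1 + cR + cR ^ 2)) ^ (2 ^ u * (v + 1)) := by
          rw [mul_pow, one_add_cR_pow_eq_one (h4.mul_right _), one_mul]
      _ = 1 := by rw [hea, one_pow]
  have hodd : Odd ((2 ^ u * (v + 1) - 1).choose (2 ^ u * v)) :=
    Nat.odd_iff.2 (Nat.choose_prime_pow_mul_succ_sub_one_modEq_one 2 u v)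
  rw [ha, he, show dS = PowerSeries.X from rfl]
  refine ⟨isUnit_iff_constantCoeff.2 (by simp [hea]), ?_⟩
  rw [← map_pow, show 2 ^ u * (2 * v + 1) = 2 ^ u * v + 2 ^ u * (v + 1) by ring,
    coeff_X_pow_mul_C_add_X_pow_mul_C_mul_inverse hea _ (by positivity), ha_pow,
    one_add_cR_pow_eq_one (h4.mul_right v), natCast_R2_eq_one_of_odd hodd, one_add_cR_sq]
  simpa using coefc2_one_add_cR_sq

end
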